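/- arXiv:1805.04673 — 2 statements merged into one kernel-verified Lean document; each statement's English description precedes it below -/
import Mathlib

section
/- Let N be an odd positive integer and θ ∈ [0, π/2]. Then the phase-space walk is exactly periodic with period 2N: U_psw(θ)^(2N) equals the 2N×2N identity matrix. -/
open Complex

/-- `ω = exp(2πi/N)`. -/
noncomputable def omegaN (N : ℕ) : ℂ := Complex.exp (2 * Real.pi * Complex.I / N)

/-- The phase-space quantum walk operator `U_psw(θ)`, a `2N × 2N` matrix indexed by
(coin, walker) pairs, with block form `[[cosθ·T, sinθ·T],[sinθ·T̃, −cosθ·T̃]]`,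
where `T` is the cyclic shift (`T|n⟩ = |n+1⟩`) and `T̃` the diagonal matrix with
`T̃|n⟩ = ω^n|n⟩`. -/
noncomputable def Upsw (N : ℕ) (θ : ℝ) :
    Matrix (Fin 2 × ZMod N) (Fin 2 × ZMod N) ℂ := fun p q =>
  if p.1 = 0 then
    (if q.1 = 0 then (Real.cos θ : ℂ) else (Real.sin θ : ℂ)) *
      (if p.2 = q.2 + 1 then 1 else 0)
  else
    (if q.1 = 0 then (Real.sin θ : ℂ) else (-Real.cos θ : ℂ)) *
      (if p.2 = q.2 then omegaN N ^ (q.2.val) else 0)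

/-!
For `sin θ ≠ 0` every `2N`-th root of unity `t` is an eigenvalue of `U_psw(θ)`. With
`c = cos θ`, `s = sin θ`, the coin-1 row of `U w = t w` determines `w (1, n)` from `w (0, n)`,
and the coin-0 row then becomes the recurrence `w (0, n + 1) = r n * w (0, n)` with
`r m = (c t + ω^m) / (t (t + c ω^m))`. Since `N` is odd, `∏ m < N, (x + y ω^m) = x^N + y^N`, so
the product of the `r m` over one period is `((c t)^N + 1) / (t^N (t^N + c^N))`, which is `1`
as `t^(2N) = 1`: the recurrence closes up around `ℤ/Nℤ`. A `2N × 2N` matrix having all `2N`-th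
roots of unity as eigenvalues has characteristic polynomial `X^(2N) - 1`, so `U^(2N) = 1` by
Cayley–Hamilton. The angles with `sin θ = 0` form a countable set, and `θ ↦ U_psw(θ)^(2N)` is
continuous, so the identity extends to them.
-/

open Matrix

open Polynomial in
theorem Matrix.pow_card_eq_one_of_forall_hasEigenvector {K ι : Type*} [Field K] [Fintype ι]
    [DecidableEq ι] {A : Matrix ι ι K} {μ : K} (hμ : IsPrimitiveRoot μ (Fintype.card ι))
    (hA : ∀ t : K, t ^ Fintype.card ι = 1 → ∃ v ≠ 0, A *ᵥ v = t • v) :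
    A ^ Fintype.card ι = 1 := by
  set n := Fintype.card ι
  obtain hn | hn := n.eq_zero_or_pos
  · rw [hn, pow_zero]
  have hcharpoly : A.charpoly = X ^ n - C 1 := by
    refine eq_of_degree_sub_lt_of_eval_finset_eq (nthRootsFinset n (1 : K)) ?_ fun t ht => ?_
    · rw [hμ.card_nthRootsFinset, ← A.charpoly_degree_eq_dim]
      refine degree_sub_lt_left ?_ A.charpoly_monic.ne_zero ?_
      · rw [A.charpoly_degree_eq_dim, degree_X_pow_sub_C hn]
      · rw [A.charpoly_monic.leadingCoeff, (monic_X_pow_sub_C 1 hn.ne').leadingCoeff]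
    · rw [mem_nthRootsFinset hn] at ht
      obtain ⟨v, hv0, hv⟩ := hA t ht
      rw [eval_charpoly, eval_sub, eval_pow, eval_X, eval_C, ht, sub_self,
        ← exists_mulVec_eq_zero_iff]
      exact ⟨v, hv0, by simp [sub_mulVec, hv]⟩
  simpa [hcharpoly, sub_eq_zero] using A.aeval_self_charpoly

theorem Finset.prod_range_val_add_one {M : Type*} [CommMonoid M] {N : ℕ} [NeZero N]
    {r : ℕ → M} (hr : ∏ m ∈ range N, r m = 1) (n : ZMod N) :
    ∏ m ∈ range (n + 1).val, r m = (∏ m ∈ range n.val, r m) * r n.val := by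
  have hval : (n + 1).val = (n.val + 1) % N := by
    rw [ZMod.val_add, ZMod.val_one_eq_one_mod, Nat.add_mod_mod]
  rw [← prod_range_succ, hval]
  rcases (Nat.succ_le_of_lt n.val_lt).lt_or_eq with h | h
  · rw [Nat.mod_eq_of_lt h]
  · rw [show n.val + 1 = N from h, Nat.mod_self, prod_range_zero, hr]

theorem IsPrimitiveRoot.prod_range_add_mul_pow {R : Type*} [CommRing R] [IsDomain R] {ζ : R}
    {n : ℕ} (hζ : IsPrimitiveRoot ζ n) (hn : Odd n) (x y : R) :
    ∏ m ∈ Finset.range n, (x + y * ζ ^ m) = x ^ n + y ^ n := by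
  have h := congrArg (Polynomial.eval x) (X_pow_sub_C_eq_prod hζ hn.pos (α := -y) rfl)
  simp only [Polynomial.eval_sub, Polynomial.eval_pow, Polynomial.eval_X, Polynomial.eval_C,
    Polynomial.eval_prod, hn.neg_pow, sub_neg_eq_add] at h
  rw [h]
  exact Finset.prod_congr rfl fun m _ => by ring

theorem IsPrimitiveRoot.prod_range_mul_add_pow_div_eq_one {K : Type*} [Field K] {ζ : K} {n : ℕ}
    (hζ : IsPrimitiveRoot ζ n) (hn : Odd n) {c t : K} (ht : t ^ (2 * n) = 1)
    (ha : ∀ m, t + c * ζ ^ m ≠ 0) :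
    ∏ m ∈ Finset.range n, (c * t + ζ ^ m) / (t * (t + c * ζ ^ m)) = 1 := by
  have ht0 : t ≠ 0 := by rintro rfl; simp [hn.pos.ne'] at ht
  have htn : (t ^ n) ^ 2 = 1 := by rw [← pow_mul, mul_comm, ht]
  have hden : t ^ n * ∏ m ∈ Finset.range n, (t + c * ζ ^ m) ≠ 0 :=
    mul_ne_zero (pow_ne_zero _ ht0) (Finset.prod_ne_zero_iff.mpr fun m _ => ha m)
  rw [Finset.prod_div_distrib, Finset.prod_mul_distrib, Finset.prod_const, Finset.card_range,
    div_eq_one_iff_eq hden]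
  have hnum := hζ.prod_range_add_mul_pow hn (c * t) 1
  simp only [one_mul, one_pow] at hnum
  rw [hnum, hζ.prod_range_add_mul_pow hn t c, mul_pow]
  linear_combination -htn

theorem Complex.add_mul_ne_zero_of_norm_ne_one {t c z : ℂ} (ht : ‖t‖ = 1) (hz : ‖z‖ = 1)
    (hc : ‖c‖ ≠ 1) : t + c * z ≠ 0 := by
  intro h
  apply hc
  simpa [norm_mul, hz, ht] using (congrArg norm (eq_neg_of_add_eq_zero_left h)).symm

theorem omegaN_isPrimitiveRoot (N : ℕ) [NeZero N] : IsPrimitiveRoot (omegaN N) N :=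
  Complex.isPrimitiveRoot_exp N (NeZero.ne N)

theorem continuous_Upsw (N : ℕ) : Continuous (Upsw N) := by
  refine continuous_pi fun p => continuous_pi fun q => ?_
  simp only [Upsw]
  split_ifs <;> fun_prop

section Action

variable {N : ℕ} [NeZero N] (θ : ℝ) (w : Fin 2 × ZMod N → ℂ) (n : ZMod N)

theorem Upsw_mulVec_apply_zero_add_one :
    (Upsw N θ *ᵥ w) (0, n + 1) = Real.cos θ * w (0, n) + Real.sin θ * w (1, n) := by
  simp [mulVec, dotProduct, Upsw, Fintype.sum_prod_type, Fin.sum_univ_two]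

theorem Upsw_mulVec_apply_one :
    (Upsw N θ *ᵥ w) (1, n) =
      omegaN N ^ n.val * (Real.sin θ * w (0, n) - Real.cos θ * w (1, n)) := by
  simp only [mulVec, dotProduct, Upsw, Fintype.sum_prod_type, Fin.sum_univ_two, Fin.isValue,
    one_ne_zero, ↓reduceIte, mul_ite, ite_mul, neg_mul, mul_zero, zero_mul, Finset.sum_ite_eq,
    Finset.mem_univ]
  ring

end Action

theorem Upsw_exists_eigenvector {N : ℕ} [NeZero N] (hN : Odd N) {θ : ℝ} (hθ : Real.sin θ ≠ 0)
    {t : ℂ} (ht : t ^ (2 * N) = 1) : ∃ w ≠ 0, Upsw N θ *ᵥ w = t • w := by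
  have hω := omegaN_isPrimitiveRoot N
  have ht1 : ‖t‖ = 1 := Complex.norm_eq_one_of_pow_eq_one ht (by simp [NeZero.ne N])
  have ht0 : t ≠ 0 := norm_ne_zero_iff.mp (by rw [ht1]; exact one_ne_zero)
  have hcs := Real.cos_sq_add_sin_sq θ
  have ha : ∀ m : ℕ, t + (Real.cos θ : ℂ) * omegaN N ^ m ≠ 0 := fun m => by
    refine Complex.add_mul_ne_zero_of_norm_ne_one ht1
      (by rw [norm_pow, hω.norm'_eq_one (NeZero.ne N), one_pow]) fun hc => hθ ?_
    rw [Complex.norm_real, Real.norm_eq_abs] at hc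
    nlinarith [sq_abs (Real.cos θ)]
  generalize hω_def : omegaN N = ω at hω ha
  generalize hc : (Real.cos θ : ℂ) = c at ha
  generalize hs : (Real.sin θ : ℂ) = s
  replace hcs : c ^ 2 + s ^ 2 = 1 := by rw [← hc, ← hs]; exact_mod_cast hcs
  set r : ℕ → ℂ := fun m => (c * t + ω ^ m) / (t * (t + c * ω ^ m))
  have hr : ∏ m ∈ Finset.range N, r m = 1 := hω.prod_range_mul_add_pow_div_eq_one hN ht ha
  set v : ZMod N → ℂ := fun n => ∏ m ∈ Finset.range n.val, r m
  set w : Fin 2 × ZMod N → ℂ := fun p =>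
    if p.1 = 0 then v p.2 else s * ω ^ p.2.val * v p.2 / (t + c * ω ^ p.2.val)
  have hw0 : ∀ n, w (0, n) = v n := fun n => if_pos rfl
  have hw1 : ∀ n, w (1, n) = s * ω ^ n.val * v n / (t + c * ω ^ n.val) :=
    fun n => if_neg one_ne_zero
  refine ⟨w, fun h => by simpa [hw0, v] using congrFun h (0, 0), ?_⟩
  rw [funext_iff, Prod.forall, Fin.forall_fin_two]
  refine ⟨fun n => ?_, fun n => ?_⟩
  · obtain ⟨n, rfl⟩ : ∃ m, n = m + 1 := ⟨n - 1, (sub_add_cancel n 1).symm⟩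
    rw [Upsw_mulVec_apply_zero_add_one, hc, hs, Pi.smul_apply, hw0, hw0, hw1, smul_eq_mul]
    simp only [v, Finset.prod_range_val_add_one hr, r]
    field_simp [ht0, ha n.val]
    linear_combination (∏ m ∈ Finset.range n.val, r m) * ω ^ n.val * hcs
  · rw [Upsw_mulVec_apply_one, hω_def, hc, hs, Pi.smul_apply, hw0, hw1, smul_eq_mul]
    linear_combination -(s * ω ^ n.val * v n) * div_self (ha n.val)

theorem Upsw_pow_two_mul_eq_one_of_sin_ne_zero {N : ℕ} [NeZero N] (hN : Odd N) {θ : ℝ}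
    (hθ : Real.sin θ ≠ 0) : Upsw N θ ^ (2 * N) = 1 := by
  have hcard : Fintype.card (Fin 2 × ZMod N) = 2 * N := by simp [ZMod.card]
  have hμ := Complex.isPrimitiveRoot_exp (2 * N) (by simp [NeZero.ne N])
  rw [← hcard] at hμ ⊢
  exact pow_card_eq_one_of_forall_hasEigenvector hμ fun t ht =>
    Upsw_exists_eigenvector hN hθ (hcard ▸ ht)

theorem psw_periodicity_general (N : ℕ) [NeZero N] (hN : Odd N)
    (θ : ℝ) :
    Upsw N θ ^ (2 * N) = 1 := by
  have hdense : Dense {θ : ℝ | Real.sin θ ≠ 0} :=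
    ((Set.countable_range fun n : ℤ => (n : ℝ) * Real.pi).mono
      fun _ => Real.sin_eq_zero_iff.mp).dense_compl ℝ
  have hpow := Continuous.ext_on hdense ((continuous_Upsw N).pow (2 * N)) continuous_const
    fun θ hθ => Upsw_pow_two_mul_eq_one_of_sin_ne_zero hN hθ
  exact congrFun hpow θ

/-- for odd `N` and `θ ∈ [0, π/2]`, the phase-space walk is exactly
periodic with period `2N`: `U_psw(θ)^(2N) = 1`. -/
theorem psw_periodicity (N : ℕ) [NeZero N] (hN : Odd N)
    (θ : ℝ) (hθ : θ ∈ Set.Icc 0 (Real.pi / 2)) :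
    Upsw N θ ^ (2 * N) = 1 :=
  psw_periodicity_general N hN θ
end

section
/- Let θ ∈ (0, π/2) and let M be a positive integer. Then ∫_0^1 tan²θ · cos(2πMx) / (1 + sec²θ + 2·secθ·cos(2πx)) dx = (−cosθ)^M, and for M = 0 the same integral equals 1. -/
/-!
With `r = -cos θ`, the integrand is `(1 - r²)/|e^{iφ} - r|² · Re (e^{iφ})^M` at `φ = 2πx`,
the Poisson kernel of the unit disc at the point `r` against the boundary values of the
holomorphic function `z ^ M`. The Poisson integral formula therefore evaluates the integral
to `Re r^M = r^M`.
-/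

open Real

lemma one_sub_two_mul_mul_cos_add_sq_pos {r : ℝ} (hr : |r| < 1) (φ : ℝ) :
    0 < 1 - 2 * r * cos φ + r ^ 2 := by
  have hrc : r * cos φ ≤ |r| := (le_abs_self _).trans <| by
    rw [abs_mul]; exact mul_le_of_le_one_right (abs_nonneg r) (abs_cos_le_one φ)
  nlinarith [sq_abs r, abs_nonneg r]

lemma poissonKernel_zero_ofReal_circleMap_zero_one (r φ : ℝ) :
    poissonKernel 0 r (circleMap 0 1 φ) = (1 - r ^ 2) / (1 - 2 * r * cos φ + r ^ 2) := by
  have hsq : ‖circleMap 0 1 φ - r‖ ^ 2 = 1 - 2 * r * cos φ + r ^ 2 := by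
    rw [Complex.sq_norm, Complex.normSq_apply, circleMap_zero]
    simp only [Complex.ofReal_one, one_mul, Complex.sub_re, Complex.exp_ofReal_mul_I_re,
      Complex.ofReal_re, Complex.sub_im, Complex.exp_ofReal_mul_I_im, Complex.ofReal_im, sub_zero]
    nlinarith [sin_sq_add_cos_sq φ]
  rw [poissonKernel_def, sub_zero, sub_zero, hsq, norm_circleMap_zero, abs_one,
    Complex.norm_real, Real.norm_eq_abs, sq_abs, one_pow]

lemma re_circleMap_zero_one_pow (M : ℕ) (φ : ℝ) :
    ((circleMap 0 1 φ) ^ M).re = cos (M * φ) := by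
  rw [circleMap_zero, Complex.ofReal_one, one_mul, ← Complex.exp_nat_mul, ← mul_assoc,
    ← Complex.ofReal_natCast, ← Complex.ofReal_mul, Complex.exp_ofReal_mul_I_re]

theorem integral_poissonKernel_mul_cos {r : ℝ} (hr : |r| < 1) (M : ℕ) :
    ∫ φ in 0..2 * π, (1 - r ^ 2) / (1 - 2 * r * cos φ + r ^ 2) * cos (M * φ)
      = 2 * π * r ^ M := by
  have hw : (r : ℂ) ∈ Metric.ball 0 1 := by simpa using hr
  have hpoisson := (differentiable_pow M).diffContOnCl.circleAverage_poissonKernel_smul hw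
  have heq (φ : ℝ) : (poissonKernel 0 r • fun z : ℂ => z ^ M) (circleMap 0 1 φ) =
      ((1 - r ^ 2) / (1 - 2 * r * cos φ + r ^ 2) : ℝ) • (circleMap 0 1 φ) ^ M := by
    rw [Pi.smul_apply', poissonKernel_zero_ofReal_circleMap_zero_one]
  have hint : CircleIntegrable (poissonKernel 0 r • fun z : ℂ => z ^ M) 0 1 := by
    unfold CircleIntegrable
    simp_rw [heq]
    apply Continuous.intervalIntegrable
    have := one_sub_two_mul_mul_cos_add_sq_pos hr
    fun_prop (disch := exact fun φ => (this φ).ne')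
  have hre := Complex.reCLM.circleAverage_comp_comm hint
  rw [hpoisson, circleAverage_def] at hre
  simp only [Function.comp_apply, heq, Complex.reCLM_apply, Complex.real_smul,
    Complex.re_ofReal_mul, re_circleMap_zero_one_pow, smul_eq_mul, ← Complex.ofReal_pow,
    Complex.ofReal_re] at hre
  rw [← hre, mul_inv_cancel_left₀ two_pi_pos.ne']

theorem integral_poissonKernel_mul_cos_two_pi_mul {r : ℝ} (hr : |r| < 1) (M : ℕ) :
    ∫ x in (0 : ℝ)..1,
        (1 - r ^ 2) / (1 - 2 * r * cos (2 * π * x) + r ^ 2) * cos (M * (2 * π * x)) = r ^ M := by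
  rw [intervalIntegral.integral_comp_mul_left
      (fun φ => (1 - r ^ 2) / (1 - 2 * r * cos φ + r ^ 2) * cos (M * φ)) two_pi_pos.ne',
    mul_zero, mul_one, integral_poissonKernel_mul_cos hr, smul_eq_mul,
    inv_mul_cancel_left₀ two_pi_pos.ne']

lemma tan_sq_mul_div_sec_eq (θ a b : ℝ) (h : cos θ ≠ 0) :
    tan θ ^ 2 * a / (1 + (1 / cos θ) ^ 2 + 2 * (1 / cos θ) * b)
      = (1 - (-cos θ) ^ 2) / (1 - 2 * (-cos θ) * b + (-cos θ) ^ 2) * a := by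
  have hnum : tan θ ^ 2 * a = (1 - (-cos θ) ^ 2) * a / cos θ ^ 2 := by
    rw [tan_eq_sin_div_cos, div_pow, sin_sq]; field_simp
  have hden : 1 + (1 / cos θ) ^ 2 + 2 * (1 / cos θ) * b
      = (1 - 2 * (-cos θ) * b + (-cos θ) ^ 2) / cos θ ^ 2 := by
    field_simp; ring
  rw [hnum, hden, div_div_div_cancel_right₀ (pow_ne_zero 2 h), div_mul_eq_mul_div]

theorem psw_fourier_integral_general (θ : ℝ) (hθ : θ ∈ Set.Ioo 0 (Real.pi / 2))
    (M : ℕ) :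
    (∫ x in (0:ℝ)..1,
        Real.tan θ ^ 2 * Real.cos (2 * Real.pi * M * x) /
          (1 + (1 / Real.cos θ) ^ 2 + 2 * (1 / Real.cos θ) * Real.cos (2 * Real.pi * x)))
      = (-Real.cos θ) ^ M ∧
    (∫ x in (0:ℝ)..1,
        Real.tan θ ^ 2 * Real.cos (2 * Real.pi * (0 : ℕ) * x) /
          (1 + (1 / Real.cos θ) ^ 2 + 2 * (1 / Real.cos θ) * Real.cos (2 * Real.pi * x)))
      = 1 := by
  have hcos_pos : 0 < cos θ := cos_pos_of_mem_Ioo ⟨by linarith [hθ.1, pi_pos], hθ.2⟩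
  have hcos_lt : cos θ < 1 := by
    simpa using cos_lt_cos_of_nonneg_of_le_pi le_rfl (by linarith [hθ.2, pi_pos]) hθ.1
  have hr : |-cos θ| < 1 := by rwa [abs_neg, abs_of_pos hcos_pos]
  have key (K : ℕ) : ∫ x in (0:ℝ)..1,
      tan θ ^ 2 * cos (2 * π * K * x) /
        (1 + (1 / cos θ) ^ 2 + 2 * (1 / cos θ) * cos (2 * π * x)) = (-cos θ) ^ K := by
    have harg (x : ℝ) : 2 * π * K * x = K * (2 * π * x) := by ring
    simp_rw [tan_sq_mul_div_sec_eq θ _ _ hcos_pos.ne', harg]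
    exact integral_poissonKernel_mul_cos_two_pi_mul hr K
  exact ⟨key M, by simpa using key 0⟩

/-- for `θ ∈ (0, π/2)` and a positive integer `M`,
`∫_0^1 tan²θ·cos(2πMx)/(1 + sec²θ + 2·secθ·cos(2πx)) dx = (−cosθ)^M`,
and for `M = 0` the same integral equals `1`. -/
theorem psw_fourier_integral (θ : ℝ) (hθ : θ ∈ Set.Ioo 0 (Real.pi / 2))
    (M : ℕ) (hM : 0 < M) :
    (∫ x in (0:ℝ)..1,
        Real.tan θ ^ 2 * Real.cos (2 * Real.pi * M * x) /
          (1 + (1 / Real.cos θ) ^ 2 + 2 * (1 / Real.cos θ) * Real.cos (2 * Real.pi * x)))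
      = (-Real.cos θ) ^ M ∧
    (∫ x in (0:ℝ)..1,
        Real.tan θ ^ 2 * Real.cos (2 * Real.pi * (0 : ℕ) * x) /
          (1 + (1 / Real.cos θ) ^ 2 + 2 * (1 / Real.cos θ) * Real.cos (2 * Real.pi * x)))
      = 1 :=
  psw_fourier_integral_general θ hθ M
end
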